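/- Let K be a field, λ, μ, k ∈ K* and n ≥ 2. If λⁿμ^{2n−1} = k^{2n−1} and λ^{n−1}μ^{2n−3} = k^{2n−3}, then λμ² = k² and λ = 1. -/

import Mathlib

/-!
Dividing the two equations gives `λμ² = k²`. Then `k^{2n-3} = (k²)^{n-2} k = (λμ²)^{n-2} k`,
and comparing with `λ^{n-1}μ^{2n-3}` leaves `λμ = k`. Squaring, `λ²μ² = k² = λμ²`, so `λ = 1`.
The argument only cancels factors, so it runs in any cancellative commutative monoid,
here `Kˣ`.
-/

section CancelCommMonoid

variable {M : Type*} [CancelCommMonoid M] {a b c : M} {m : ℕ}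

theorem mul_sq_eq_sq_of_pow_eq_pow (h₁ : a ^ (m + 2) * b ^ (2 * m + 3) = c ^ (2 * m + 3))
    (h₂ : a ^ (m + 1) * b ^ (2 * m + 1) = c ^ (2 * m + 1)) : a * b ^ 2 = c ^ 2 := by
  refine mul_left_cancel (a := c ^ (2 * m + 1)) ?_
  calc c ^ (2 * m + 1) * (a * b ^ 2) = a ^ (m + 1) * b ^ (2 * m + 1) * (a * b ^ 2) := by rw [h₂]
    _ = a ^ (m + 2) * b ^ (2 * m + 3) := by rw [pow_succ a (m + 1), pow_add b (2 * m + 1) 2]; ac_rfl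
    _ = c ^ (2 * m + 1) * c ^ 2 := by rw [h₁, ← pow_add]

theorem mul_eq_of_mul_sq_eq_sq (hsq : a * b ^ 2 = c ^ 2)
    (h : a ^ (m + 1) * b ^ (2 * m + 1) = c ^ (2 * m + 1)) : a * b = c := by
  refine mul_left_cancel (a := (a * b ^ 2) ^ m) ?_
  calc (a * b ^ 2) ^ m * (a * b) = a ^ (m + 1) * b ^ (2 * m + 1) := by
        rw [mul_pow, ← pow_mul, pow_succ, pow_succ]; ac_rfl
    _ = (c ^ 2) ^ m * c := by rw [h, pow_succ, pow_mul]
    _ = (a * b ^ 2) ^ m * c := by rw [hsq]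

theorem eq_one_of_mul_eq_of_mul_sq_eq_sq (hsq : a * b ^ 2 = c ^ 2) (h : a * b = c) : a = 1 := by
  refine mul_right_cancel (b := a * b ^ 2) ?_
  calc a * (a * b ^ 2) = (a * b) ^ 2 := by rw [mul_pow, sq a, mul_assoc]
    _ = 1 * (a * b ^ 2) := by rw [h, hsq, one_mul]

end CancelCommMonoid

/-- Key arithmetic lemma: if `λⁿμ^{2n-1} = k^{2n-1}` and `λ^{n-1}μ^{2n-3} = k^{2n-3}`
for units `λ, μ, k` and `n ≥ 2`, then `λμ² = k²` and `λ = 1`. -/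
theorem stmt_15 {K : Type*} [Field K] (lam mu k : K)
    (hlam : lam ≠ 0) (hmu : mu ≠ 0) (hk : k ≠ 0) (n : ℕ) (hn : 2 ≤ n)
    (h1 : lam ^ n * mu ^ (2 * n - 1) = k ^ (2 * n - 1))
    (h2 : lam ^ (n - 1) * mu ^ (2 * n - 3) = k ^ (2 * n - 3)) :
    lam * mu ^ 2 = k ^ 2 ∧ lam = 1 := by
  obtain ⟨m, rfl⟩ : ∃ m, n = m + 2 := ⟨n - 2, by omega⟩
  rw [show 2 * (m + 2) - 1 = 2 * m + 3 by omega] at h1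
  rw [show m + 2 - 1 = m + 1 by omega, show 2 * (m + 2) - 3 = 2 * m + 1 by omega] at h2
  obtain ⟨l, rfl⟩ := hlam.isUnit
  obtain ⟨u, rfl⟩ := hmu.isUnit
  obtain ⟨v, rfl⟩ := hk.isUnit
  have e₁ : l ^ (m + 2) * u ^ (2 * m + 3) = v ^ (2 * m + 3) := Units.ext (by exact_mod_cast h1)
  have e₂ : l ^ (m + 1) * u ^ (2 * m + 1) = v ^ (2 * m + 1) := Units.ext (by exact_mod_cast h2)
  have hsq := mul_sq_eq_sq_of_pow_eq_pow e₁ e₂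
  have hl := eq_one_of_mul_eq_of_mul_sq_eq_sq hsq (mul_eq_of_mul_sq_eq_sq hsq e₂)
  exact ⟨by exact_mod_cast hsq, by simp [hl]⟩
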